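/- arXiv:1904.10556 — 2 statements merged into one kernel-verified Lean document; each statement's English description precedes it below -/
import Mathlib

section
/- Let 0 < α < 1, k₀₁ > 0, k > 0, and define q(t) = k₀₁ · t · E_{α,2}(-k·t^α) for t ≥ 0. Then q(0) = 0, q is differentiable on (0,∞), and q solves the one-compartment model with constant-rate input and fractional elimination: for every t > 0, q'(t) = k₀₁ - k · (1/Γ(α)) · ∫_0^t q'(τ)·(t-τ)^{α-1} dτ (the integral term being the Caputo derivative of order 1-α of q). -/
/-- The two-parameter Mittag-Leffler function `E_{a,b}(z) = ∑_{k=0}^∞ z^k / Γ(a·k + b)`. -/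
noncomputable def mittagLeffler (a b : ℝ) (z : ℝ) : ℝ :=
  ∑' k : ℕ, z ^ k / Real.Gamma (a * k + b)

/-!
Expanding the series termwise, `q(t) = k₀₁ ∑ₙ (-k)ⁿ t^(αn+1) / Γ(αn+2)`, hence
`q' = k₀₁ E_{α,1}(-k t^α)`. The Beta integral
`∫₀ᵗ τ^(αn) (t-τ)^(α-1) dτ = Γ(αn+1) Γ(α) / Γ(αn+α+1) · t^(αn+α)` turns the Caputo term into
`k₀₁ t^α E_{α,α+1}(-k t^α)`, and the equation becomes the shift identity
`E_{α,1}(z) = 1 + z E_{α,α+1}(z)`. Differentiating and integrating termwise is justified because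
`Γ(αn+β)` outgrows every geometric sequence.
-/

open Real Filter Topology MeasureTheory Set
open scoped Nat

lemma factorial_floor_sub_one_le_Gamma {s : ℝ} (hs : 2 ≤ s) : ((⌊s⌋₊ - 1)! : ℝ) ≤ Gamma s := by
  have h2 : 2 ≤ ⌊s⌋₊ := Nat.le_floor (by exact_mod_cast hs)
  have hcast : ((⌊s⌋₊ - 1 : ℕ) : ℝ) + 1 = ⌊s⌋₊ := by
    rw [Nat.cast_sub (by omega)]; push_cast; ring
  rw [← Gamma_nat_eq_factorial, hcast]
  exact Gamma_strictMonoOn_Ici.monotoneOn (mem_Ici.mpr (by exact_mod_cast h2)) hs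
    (Nat.floor_le (by linarith))

lemma tendsto_rpow_div_Gamma_atTop {D : ℝ} (hD : 1 ≤ D) :
    Tendsto (fun s => D ^ s / Gamma s) atTop (𝓝 0) := by
  have hfact : Tendsto (fun s : ℝ => D ^ 2 * (D ^ (⌊s⌋₊ - 1) / (⌊s⌋₊ - 1)!)) atTop (𝓝 0) := by
    simpa using ((FloorSemiring.tendsto_pow_div_factorial_atTop D).comp
      ((tendsto_sub_atTop_nat 1).comp tendsto_nat_floor_atTop)).const_mul (D ^ 2)
  refine squeeze_zero' ?_ ?_ hfact
  · filter_upwards [eventually_gt_atTop 0] with s hs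
    exact div_nonneg (by positivity) (Gamma_pos_of_pos hs).le
  · filter_upwards [eventually_ge_atTop 2] with s hs
    have h2 : 2 ≤ ⌊s⌋₊ := Nat.le_floor (by exact_mod_cast hs)
    have hexp : s ≤ ((⌊s⌋₊ - 1 + 2 : ℕ) : ℝ) := by
      rw [show ⌊s⌋₊ - 1 + 2 = ⌊s⌋₊ + 1 by omega]
      exact_mod_cast (Nat.lt_floor_add_one s).le
    calc D ^ s / Gamma s ≤ D ^ (⌊s⌋₊ - 1 + 2) / (⌊s⌋₊ - 1)! := by
          rw [← rpow_natCast]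
          exact div_le_div₀ (by positivity) (rpow_le_rpow_of_exponent_le hD hexp)
            (by positivity) (factorial_floor_sub_one_le_Gamma hs)
      _ = D ^ 2 * (D ^ (⌊s⌋₊ - 1) / (⌊s⌋₊ - 1)!) := by ring

lemma summable_pow_div_Gamma {α : ℝ} (hα : 0 < α) (β x : ℝ) :
    Summable (fun n : ℕ => x ^ n / Gamma (α * n + β)) := by
  set c := |x| + 1
  have hc : 1 ≤ c := by simp [c]
  have hs : Tendsto (fun n : ℕ => α * n + β) atTop atTop :=
    tendsto_atTop_add_const_right _ _ (tendsto_natCast_atTop_atTop.const_mul_atTop hα)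
  have hlim : Tendsto (fun n : ℕ => c ^ n / Gamma (α * n + β)) atTop (𝓝 0) := by
    have hD : 1 ≤ c ^ α⁻¹ := one_le_rpow hc (by positivity)
    convert ((tendsto_rpow_div_Gamma_atTop hD).comp hs).const_mul (c ^ (-β / α)) using 2 with n
    · simp only [Function.comp_apply, ← rpow_mul (by positivity : (0:ℝ) ≤ c), mul_div_assoc',
        ← rpow_add (by positivity : (0:ℝ) < c)]
      rw [show -β / α + α⁻¹ * (α * n + β) = n by field_simp; ring, rpow_natCast]
    · simp
  have hratio : |x| / c < 1 := (div_lt_one (by positivity)).mpr (lt_add_one |x|)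
  refine Summable.of_norm_bounded_eventually_nat
    (summable_geometric_of_lt_one (by positivity) hratio) ?_
  filter_upwards [hlim.eventually_lt_const one_pos, hs.eventually_gt_atTop 0] with n hle hpos
  have hΓ := Gamma_pos_of_pos hpos
  rw [norm_div, norm_pow, Real.norm_of_nonneg hΓ.le, Real.norm_eq_abs, div_pow]
  rw [div_lt_one hΓ] at hle
  exact div_le_div_of_nonneg_left (by positivity) (by positivity) hle.le

lemma integral_rpow_mul_sub_rpow {a b t : ℝ} (ha : 0 < a) (hb : 0 < b) (ht : 0 < t) :
    ∫ x in 0..t, x ^ (a - 1) * (t - x) ^ (b - 1)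
      = Gamma a * Gamma b / Gamma (a + b) * t ^ (a + b - 1) := by
  have hcpx := Complex.betaIntegral_scaled a b ht
  rw [Complex.betaIntegral_eq_Gamma_mul_div _ _ (by simpa) (by simpa)] at hcpx
  apply Complex.ofReal_injective
  rw [← intervalIntegral.integral_ofReal]
  convert hcpx using 1
  · refine intervalIntegral.integral_congr fun x hx => ?_
    rw [uIcc_of_le ht.le] at hx
    simp only [Complex.ofReal_mul, Complex.ofReal_cpow hx.1,
      Complex.ofReal_cpow (sub_nonneg.mpr hx.2)]
    push_cast
    ring
  · rw [Complex.ofReal_mul, Complex.ofReal_cpow ht.le, ← Complex.ofReal_add, Complex.ofReal_div,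
      Complex.ofReal_mul, ← Complex.Gamma_ofReal, ← Complex.Gamma_ofReal, ← Complex.Gamma_ofReal]
    push_cast
    ring

lemma intervalIntegrable_rpow_mul_sub_rpow {a b t : ℝ} (ha : 0 < a) (hb : 0 < b) (ht : 0 < t) :
    IntervalIntegrable (fun x => x ^ (a - 1) * (t - x) ^ (b - 1)) volume 0 t := by
  -- a non-integrable function would have integral `0`
  refine intervalIntegral.intervalIntegrable_of_integral_ne_zero ?_
  rw [integral_rpow_mul_sub_rpow ha hb ht]
  positivity

lemma mul_rpow_pow {y : ℝ} (hy : 0 ≤ y) (c α : ℝ) (n : ℕ) :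
    (c * y ^ α) ^ n = c ^ n * y ^ (α * n) := by
  rw [mul_pow, rpow_mul_natCast hy]

lemma mittagLeffler_mul_rpow {y : ℝ} (hy : 0 ≤ y) (α β c : ℝ) :
    mittagLeffler α β (c * y ^ α) = ∑' n : ℕ, c ^ n * (y ^ (α * n) / Gamma (α * n + β)) := by
  simp only [mittagLeffler, mul_rpow_pow hy, mul_div_assoc]

lemma mittagLeffler_eq_inv_Gamma_add_mul {α : ℝ} (hα : 0 < α) (β z : ℝ) :
    mittagLeffler α β z = (Gamma β)⁻¹ + z * mittagLeffler α (α + β) z := by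
  rw [mittagLeffler, (summable_pow_div_Gamma hα β z).tsum_eq_zero_add, mittagLeffler,
    ← tsum_mul_left]
  congr 1
  · simp
  · refine tsum_congr fun n => ?_
    push_cast
    rw [pow_succ, show α * (n + 1) + β = α * n + (α + β) by ring]
    ring

lemma hasDerivAt_rpow_add_one_div_Gamma {s : ℝ} (hs : 0 ≤ s) (y : ℝ) :
    HasDerivAt (fun y => y ^ (s + 1) / Gamma (s + 2)) (y ^ s / Gamma (s + 1)) y := by
  have hΓ : Gamma (s + 2) = (s + 1) * Gamma (s + 1) := by
    rw [show s + 2 = s + 1 + 1 by ring, Gamma_add_one (by positivity)]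
  refine ((hasDerivAt_rpow_const (p := s + 1) (Or.inr (by linarith))).div_const _).congr_deriv ?_
  rw [hΓ, add_sub_cancel_right]
  field_simp [(Gamma_pos_of_pos (by positivity : 0 < s + 1)).ne']

lemma hasDerivAt_mul_mittagLeffler_two {α : ℝ} (hα : 0 < α) (c : ℝ) {t : ℝ} (ht : 0 < t) :
    HasDerivAt (fun y => y * mittagLeffler α 2 (c * y ^ α)) (mittagLeffler α 1 (c * t ^ α)) t := by
  set g : ℕ → ℝ → ℝ := fun n y => c ^ n * (y ^ (α * n + 1) / Gamma (α * n + 2))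
  set g' : ℕ → ℝ → ℝ := fun n y => c ^ n * (y ^ (α * n) / Gamma (α * n + 1))
  have hmem : t ∈ Ioo 0 (t + 1) := ⟨ht, lt_add_one t⟩
  have hg : ∀ n, ∀ y ∈ Ioo 0 (t + 1), HasDerivAt (g n) (g' n y) y := fun n y _ =>
    (hasDerivAt_rpow_add_one_div_Gamma (by positivity) y).const_mul _
  have hg' : ∀ n, ∀ y ∈ Ioo 0 (t + 1),
      ‖g' n y‖ ≤ (|c| * (t + 1) ^ α) ^ n / Gamma (α * n + 1) := by
    intro n y ⟨hy0, hyt⟩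
    rw [mul_rpow_pow (by linarith) _ _ n, norm_mul, norm_pow, Real.norm_eq_abs,
      Real.norm_of_nonneg (by positivity), mul_div_assoc]
    gcongr
  have hseries : ∀ y, 0 < y → y * mittagLeffler α 2 (c * y ^ α) = ∑' n, g n y := by
    intro y hy
    rw [mittagLeffler_mul_rpow hy.le, ← tsum_mul_left]
    refine tsum_congr fun n => ?_
    simp only [g, rpow_add_one hy.ne']
    ring
  have hsum : Summable (fun n => g n t) := by
    refine ((summable_pow_div_Gamma hα 2 (c * t ^ α)).mul_left t).congr fun n => ?_
    simp only [g, mul_rpow_pow ht.le, rpow_add_one ht.ne']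
    ring
  have hderiv := hasDerivAt_tsum_of_isPreconnected (summable_pow_div_Gamma hα 1 _) isOpen_Ioo
    (convex_Ioo 0 (t + 1)).isPreconnected hg hg' hmem hsum hmem
  rw [mittagLeffler_mul_rpow ht.le]
  refine hderiv.congr_of_eventuallyEq ?_
  filter_upwards [Ioi_mem_nhds ht] with y hy using hseries y hy

lemma integral_mittagLeffler_one_mul_sub_rpow {α : ℝ} (hα : 0 < α) (c : ℝ) {t : ℝ} (ht : 0 < t) :
    ∫ τ in 0..t, mittagLeffler α 1 (c * τ ^ α) * (t - τ) ^ (α - 1)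
      = Gamma α * t ^ α * mittagLeffler α (α + 1) (c * t ^ α) := by
  set F : ℝ → ℕ → ℝ → ℝ := fun c n τ =>
    c ^ n / Gamma (α * n + 1) * (τ ^ (α * n) * (t - τ) ^ (α - 1))
  have hbeta : ∀ n : ℕ, ∫ τ in 0..t, τ ^ (α * n) * (t - τ) ^ (α - 1)
      = Gamma (α * n + 1) * Gamma α / Gamma (α * n + 1 + α) * t ^ (α * n + 1 + α - 1) := by
    intro n
    simpa only [add_sub_cancel_right] using
      integral_rpow_mul_sub_rpow (a := α * n + 1) (by positivity) hα ht
  have hterm : ∀ c n, ∫ τ in Ioc 0 t, F c n τ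
      = Gamma α * t ^ α * ((c * t ^ α) ^ n / Gamma (α * n + (α + 1))) := by
    intro c n
    rw [integral_const_mul, ← intervalIntegral.integral_of_le ht.le, hbeta, mul_rpow_pow ht.le,
      show α * n + 1 + α - 1 = α * n + α by ring, rpow_add ht,
      show α * n + 1 + α = α * n + (α + 1) by ring]
    field_simp [(Gamma_pos_of_pos (by positivity : 0 < α * n + 1)).ne']
  have hint : ∀ n, Integrable (F c n) (volume.restrict (Ioc 0 t)) := by
    intro n
    have h := intervalIntegrable_rpow_mul_sub_rpow (a := α * n + 1) (by positivity) hα ht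
    rw [add_sub_cancel_right] at h
    exact h.1.const_mul _
  have hnorm : ∀ n, ∫ τ in Ioc 0 t, ‖F c n τ‖ = ∫ τ in Ioc 0 t, F |c| n τ := fun n =>
    setIntegral_congr_fun measurableSet_Ioc fun τ ⟨hτ0, hτt⟩ => by
      have : 0 ≤ t - τ := sub_nonneg.mpr hτt
      simp only [F, norm_mul, norm_div, norm_pow, Real.norm_eq_abs,
        abs_of_pos (Gamma_pos_of_pos (by positivity : 0 < α * n + 1)),
        abs_of_nonneg (rpow_nonneg hτ0.le _), abs_of_nonneg (rpow_nonneg this _)]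
  have hsum : Summable fun n => ∫ τ in Ioc 0 t, ‖F c n τ‖ := by
    simp only [hnorm, hterm]
    exact (summable_pow_div_Gamma hα (α + 1) _).mul_left _
  calc ∫ τ in 0..t, mittagLeffler α 1 (c * τ ^ α) * (t - τ) ^ (α - 1)
      = ∫ τ in Ioc 0 t, ∑' n, F c n τ := by
        rw [intervalIntegral.integral_of_le ht.le]
        refine setIntegral_congr_fun measurableSet_Ioc fun τ hτ => ?_
        rw [mittagLeffler_mul_rpow hτ.1.le, ← tsum_mul_right]
        exact tsum_congr fun n => by ring
    _ = ∑' n, ∫ τ in Ioc 0 t, F c n τ := (integral_tsum_of_summable_integral_norm hint hsum).symm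
    _ = Gamma α * t ^ α * mittagLeffler α (α + 1) (c * t ^ α) := by
        simp only [hterm, tsum_mul_left, mittagLeffler]

theorem constant_infusion_fractional_elimination_general (α k₀₁ k : ℝ)
    (hα : 0 < α) (q : ℝ → ℝ)
    (hq : q = fun t : ℝ => k₀₁ * t * mittagLeffler α 2 (-(k * t ^ α))) :
    q 0 = 0 ∧
    (∀ t : ℝ, 0 < t → DifferentiableAt ℝ q t) ∧
    (∀ t : ℝ, 0 < t →
      deriv q t = k₀₁ -
        k * ((1 / Real.Gamma α) * ∫ τ in (0:ℝ)..t, deriv q τ * (t - τ) ^ (α - 1))) := by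
  have hderiv : ∀ t, 0 < t → HasDerivAt q (k₀₁ * mittagLeffler α 1 (-k * t ^ α)) t := by
    intro t ht
    simpa only [hq, mul_assoc, neg_mul] using
      (hasDerivAt_mul_mittagLeffler_two hα (-k) ht).const_mul k₀₁
  refine ⟨by simp [hq], fun t ht => (hderiv t ht).differentiableAt, fun t ht => ?_⟩
  have hcaputo : ∫ τ in 0..t, deriv q τ * (t - τ) ^ (α - 1)
      = k₀₁ * (Gamma α * t ^ α * mittagLeffler α (α + 1) (-k * t ^ α)) := by
    rw [← integral_mittagLeffler_one_mul_sub_rpow hα (-k) ht, ← intervalIntegral.integral_const_mul]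
    refine intervalIntegral.integral_congr_ae (Eventually.of_forall fun τ hτ => ?_)
    rw [uIoc_of_le ht.le] at hτ
    rw [(hderiv τ hτ.1).deriv, mul_assoc]
  rw [(hderiv t ht).deriv, hcaputo, mittagLeffler_eq_inv_Gamma_add_mul hα, Gamma_one]
  field_simp [(Gamma_pos_of_pos hα).ne']
  ring

/-- Let 0 < α < 1, k₀₁ > 0, k > 0, and define
`q(t) = k₀₁ · t · E_{α,2}(-k·t^α)`. Then q(0) = 0, q is differentiable on (0,∞),
and q solves the one-compartment model with constant-rate input and fractional
elimination: for every t > 0,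
`q'(t) = k₀₁ - k · (1/Γ(α)) · ∫_0^t q'(τ)·(t-τ)^{α-1} dτ`. -/
theorem constant_infusion_fractional_elimination (α k₀₁ k : ℝ)
    (hα : 0 < α) (hα1 : α < 1) (hk₀₁ : 0 < k₀₁) (hk : 0 < k) (q : ℝ → ℝ)
    (hq : q = fun t : ℝ => k₀₁ * t * mittagLeffler α 2 (-(k * t ^ α))) :
    q 0 = 0 ∧
    (∀ t : ℝ, 0 < t → DifferentiableAt ℝ q t) ∧
    (∀ t : ℝ, 0 < t →
      deriv q t = k₀₁ -
        k * ((1 / Real.Gamma α) * ∫ τ in (0:ℝ)..t, deriv q τ * (t - τ) ^ (α - 1))) :=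
  constant_infusion_fractional_elimination_general α k₀₁ k hα q hq
end

section
/- Let A be a real n×n matrix, 0 < γ < 1, and x₀ ∈ ℝⁿ. Then the series x(t) = ∑_{k=0}^∞ (t^{k·γ}/Γ(k·γ + 1)) · A^k · x₀ converges for every t ≥ 0, the function x is differentiable on (0,∞), and x solves the homogeneous commensurate linear fractional system ᶜD^γ x = A·x: for every t > 0, (1/Γ(1-γ)) · ∫_0^t x'(τ)·(t-τ)^{-γ} dτ = A·x(t), with x(0) = x₀. -/
/-!
The coefficients `1 / Γ(kγ + 1)` beat every geometric sequence: log-convexity of `Γ` gives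
`Γ(kγ + 1) ≤ ((k + 1)γ)^(-γ) Γ((k + 1)γ + 1)`, so the ratio test applies. Hence the series and
its termwise derivative converge locally uniformly on `(0, ∞)`. By Euler's Beta integral the
Caputo derivative of `t^((k+1)γ) / Γ((k+1)γ + 1)` is `t^(kγ) / Γ(kγ + 1)`; all these integrands
are nonnegative, so integral and sum may be exchanged, and `ᶜD^γ` shifts the series
`∑ t^(kγ) / Γ(kγ + 1) • Aᵏ x₀` by one index, which is multiplication by `A`.
-/

open Filter MeasureTheory Set Topology

namespace Real

/-- Log-convexity of `Γ` at `s + b = (1 - b) s + b (s + 1)`. -/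
theorem Gamma_add_le_rpow_mul_Gamma_add_one {s b : ℝ} (hs : 0 < s) (hb0 : 0 < b) (hb1 : b < 1) :
    Gamma (s + b) ≤ s ^ (b - 1) * Gamma (s + 1) := by
  have hΓ := Gamma_pos_of_pos hs
  have h := Gamma_mul_add_mul_le_rpow_Gamma_mul_rpow_Gamma hs (by linarith : 0 < s + 1)
    (by linarith : 0 < 1 - b) hb0 (by ring)
  rw [show (1 - b) * s + b * (s + 1) = s + b by ring, Gamma_add_one hs.ne',
    mul_rpow hs.le hΓ.le] at h
  have hsplit : Gamma s ^ (1 - b) * Gamma s ^ b = Gamma s := by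
    rw [← rpow_add hΓ, sub_add_cancel, rpow_one]
  calc Gamma (s + b) ≤ Gamma s ^ (1 - b) * (s ^ b * Gamma s ^ b) := h
    _ = s ^ (b - 1) * Gamma (s + 1) := by
      rw [Gamma_add_one hs.ne', rpow_sub_one hs.ne', mul_left_comm, hsplit]
      field_simp

theorem summable_pow_div_Gamma_mul_add_one {γ : ℝ} (hγ0 : 0 < γ) (hγ1 : γ < 1) (B : ℝ) :
    Summable fun k : ℕ => B ^ k / Gamma (k * γ + 1) := by
  refine summable_of_ratio_norm_eventually_le (r := 1 / 2) (by norm_num) ?_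
  have hlim : Tendsto (fun k : ℕ => |B| * (((k : ℝ) + 1) * γ) ^ (-γ)) atTop (𝓝 0) := by
    simpa using ((tendsto_rpow_neg_atTop hγ0).comp <|
      (tendsto_atTop_add_const_right _ 1 tendsto_natCast_atTop_atTop).atTop_mul_const
        hγ0).const_mul |B|
  filter_upwards [hlim.eventually (Iic_mem_nhds (by norm_num : (0 : ℝ) < 1 / 2))] with k hk
  have hs : 0 < ((k : ℝ) + 1) * γ := by positivity
  have hΓ := Gamma_add_le_rpow_mul_Gamma_add_one hs (by linarith : 0 < 1 - γ) (by linarith)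
  rw [show ((k : ℝ) + 1) * γ + (1 - γ) = k * γ + 1 by ring, sub_sub_cancel_left] at hΓ
  have hΓk := Gamma_pos_of_pos (by positivity : (0 : ℝ) < k * γ + 1)
  have hΓs := Gamma_pos_of_pos (by positivity : (0 : ℝ) < ((k : ℝ) + 1) * γ + 1)
  simp only [norm_div, norm_pow, norm_eq_abs, abs_of_pos hΓk, Nat.cast_succ, abs_of_pos hΓs]
  have hratio : |B| * Gamma (k * γ + 1) ≤ 1 / 2 * Gamma (((k : ℝ) + 1) * γ + 1) := calc
    |B| * Gamma (k * γ + 1)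
        ≤ |B| * ((((k : ℝ) + 1) * γ) ^ (-γ) * Gamma (((k : ℝ) + 1) * γ + 1)) := by gcongr
    _ = |B| * (((k : ℝ) + 1) * γ) ^ (-γ) * Gamma (((k : ℝ) + 1) * γ + 1) := by ring
    _ ≤ 1 / 2 * Gamma (((k : ℝ) + 1) * γ + 1) := by gcongr
  rw [pow_succ, div_le_iff₀ hΓs]
  calc |B| ^ k * |B| = |B| ^ k * (|B| * Gamma (k * γ + 1)) / Gamma (k * γ + 1) := by field_simp
    _ ≤ |B| ^ k * (1 / 2 * Gamma (((k : ℝ) + 1) * γ + 1)) / Gamma (k * γ + 1) := by gcongr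
    _ = 1 / 2 * (|B| ^ k / Gamma (k * γ + 1)) * Gamma (((k : ℝ) + 1) * γ + 1) := by ring

theorem integral_rpow_mul_sub_rpow {a b t : ℝ} (ha : 0 < a) (hb : 0 < b) (ht : 0 < t) :
    ∫ τ in (0 : ℝ)..t, τ ^ (a - 1) * (t - τ) ^ (b - 1)
      = t ^ (a + b - 1) * (Gamma a * Gamma b / Gamma (a + b)) := by
  have hbeta : Complex.betaIntegral a b = ((Gamma a * Gamma b / Gamma (a + b) : ℝ) : ℂ) := by
    have hΓ : Complex.Gamma (a + b) ≠ 0 := by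
      rw [← Complex.ofReal_add, Complex.Gamma_ofReal, Complex.ofReal_ne_zero]
      exact (Gamma_pos_of_pos (by linarith)).ne'
    push_cast [← Complex.Gamma_ofReal]
    rw [eq_div_iff hΓ, mul_comm]
    exact (Complex.Gamma_mul_Gamma_eq_betaIntegral (by simpa using ha) (by simpa using hb)).symm
  have hcpow : EqOn (fun τ : ℝ => ((τ ^ (a - 1) * (t - τ) ^ (b - 1) : ℝ) : ℂ))
      (fun τ : ℝ => (τ : ℂ) ^ ((a : ℂ) - 1) * ((t : ℂ) - τ) ^ ((b : ℂ) - 1)) (uIcc 0 t) := by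
    intro τ hτ
    rw [uIcc_of_le ht.le] at hτ
    push_cast [Complex.ofReal_cpow hτ.1, Complex.ofReal_cpow (sub_nonneg.mpr hτ.2)]
    rfl
  rw [← Complex.ofReal_inj, ← intervalIntegral.integral_ofReal,
    intervalIntegral.integral_congr hcpow, Complex.betaIntegral_scaled _ _ ht, hbeta]
  push_cast [Complex.ofReal_cpow ht.le]
  rfl

theorem integral_sub_rpow_mul_deriv_rpow_div_Gamma {a b t : ℝ} (ha : 0 < a) (hb : 0 < b)
    (ht : 0 < t) :
    ∫ τ in (0 : ℝ)..t, (t - τ) ^ (b - 1) * (a * τ ^ (a - 1) / Gamma (a + 1))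
      = Gamma b * (t ^ (a + b - 1) / Gamma (a + b)) := by
  have hΓ := Gamma_pos_of_pos ha
  have hΓ' := Gamma_pos_of_pos (add_pos ha hb)
  have hintegrand : (fun τ => (t - τ) ^ (b - 1) * (a * τ ^ (a - 1) / Gamma (a + 1)))
      = fun τ => τ ^ (a - 1) * (t - τ) ^ (b - 1) / Gamma a := by
    funext τ
    rw [Gamma_add_one ha.ne']
    field_simp
  rw [hintegrand, intervalIntegral.integral_div, integral_rpow_mul_sub_rpow ha hb ht]
  field_simp

theorem intervalIntegrable_sub_rpow_mul_deriv_rpow_div_Gamma {a b t : ℝ} (ha : 0 < a)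
    (hb : 0 < b) (ht : 0 < t) :
    IntervalIntegrable (fun τ => (t - τ) ^ (b - 1) * (a * τ ^ (a - 1) / Gamma (a + 1)))
      volume 0 t := by
  -- a non-integrable function would have integral `0`, but this integral is positive
  by_contra h
  have hval := integral_sub_rpow_mul_deriv_rpow_div_Gamma ha hb ht
  rw [intervalIntegral.integral_undef h] at hval
  have := Gamma_pos_of_pos hb
  have := Gamma_pos_of_pos (add_pos ha hb)
  exact (hval.symm.trans_lt (by positivity)).false

theorem abs_deriv_rpow_div_Gamma_le {γ α β y : ℝ} (hγ0 : 0 ≤ γ) (hγ1 : γ ≤ 1) (hα : 0 < α)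
    (hy : y ∈ Ioo α β) (k : ℕ) :
    |k * γ * y ^ ((k : ℝ) * γ - 1) / Gamma (k * γ + 1)|
      ≤ (2 * β ^ γ) ^ k / (α * Gamma (k * γ + 1)) := by
  have hy0 : 0 < y := hα.trans hy.1
  have hΓ := Gamma_pos_of_pos (by positivity : (0 : ℝ) < k * γ + 1)
  have hkγ : (k : ℝ) * γ ≤ 2 ^ k := calc
    (k : ℝ) * γ ≤ k := mul_le_of_le_one_right k.cast_nonneg hγ1
    _ ≤ 2 ^ k := by exact_mod_cast k.lt_two_pow_self.le
  have hpow : y ^ ((k : ℝ) * γ - 1) ≤ (β ^ γ) ^ k / α := by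
    have hβ : 0 ≤ β := (hy0.trans hy.2).le
    rw [rpow_sub_one hy0.ne', ← rpow_natCast, ← rpow_mul hβ, mul_comm γ]
    exact div_le_div₀ (rpow_nonneg hβ _) (rpow_le_rpow hy0.le hy.2.le (by positivity)) hα hy.1.le
  rw [abs_of_nonneg (by positivity)]
  calc k * γ * y ^ ((k : ℝ) * γ - 1) / Gamma (k * γ + 1)
      ≤ 2 ^ k * ((β ^ γ) ^ k / α) / Gamma (k * γ + 1) := by gcongr
    _ = (2 * β ^ γ) ^ k / (α * Gamma (k * γ + 1)) := by ring

end Real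

section MittagLeffler

variable {E : Type*} [NormedAddCommGroup E] [NormedSpace ℝ E]

theorem MeasureTheory.integral_tsum_smul [CompleteSpace E] {α ι : Type*} [MeasurableSpace α]
    [Countable ι] {μ : Measure α} {f : ι → α → ℝ} {w : ι → E} (hf : ∀ i, Integrable (f i) μ)
    (hs : Summable fun i => (∫ a, |f i a| ∂μ) * ‖w i‖) :
    ∫ a, ∑' i, f i a • w i ∂μ = ∑' i, (∫ a, f i a ∂μ) • w i := by
  rw [← integral_tsum_of_summable_integral_norm fun i => (hf i).smul_const (w i)]
  · simp only [integral_smul_const]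
  · simpa only [norm_smul, Real.norm_eq_abs, integral_mul_const] using hs

theorem ContinuousLinearMap.norm_le_pow_mul_of_succ_eq (L : E →L[ℝ] E) {v : ℕ → E}
    (hv : ∀ k, v (k + 1) = L (v k)) (k : ℕ) : ‖v k‖ ≤ ‖L‖ ^ k * ‖v 0‖ := by
  induction k with
  | zero => simp
  | succ k ih =>
    calc ‖v (k + 1)‖ ≤ ‖L‖ * ‖v k‖ := hv k ▸ L.le_opNorm (v k)
      _ ≤ ‖L‖ * (‖L‖ ^ k * ‖v 0‖) := by gcongr
      _ = ‖L‖ ^ (k + 1) * ‖v 0‖ := by ring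

/-- With `v k = Aᵏ x₀` this is `E_γ(A t^γ) x₀`. -/
noncomputable def mittagLefflerSeries (γ : ℝ) (v : ℕ → E) (t : ℝ) : E :=
  ∑' k : ℕ, (t ^ ((k : ℝ) * γ) / Real.Gamma ((k : ℝ) * γ + 1)) • v k

variable {γ C M : ℝ} {v : ℕ → E}

theorem mittagLefflerSeries_zero (hγ : γ ≠ 0) : mittagLefflerSeries γ v 0 = v 0 := by
  rw [mittagLefflerSeries, tsum_eq_single 0 fun k hk => by
    rw [Real.zero_rpow (mul_ne_zero (Nat.cast_ne_zero.mpr hk) hγ), zero_div, zero_smul]]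
  simp

theorem summable_mittagLeffler_terms [CompleteSpace E] (hγ0 : 0 < γ) (hγ1 : γ < 1)
    (hv : ∀ k, ‖v k‖ ≤ C ^ k * M) {t : ℝ} (ht : 0 ≤ t) :
    Summable fun k : ℕ => (t ^ ((k : ℝ) * γ) / Real.Gamma ((k : ℝ) * γ + 1)) • v k := by
  refine .of_norm_bounded
    ((Real.summable_pow_div_Gamma_mul_add_one hγ0 hγ1 (t ^ γ * C)).mul_left M) fun k => ?_
  have hΓ := Real.Gamma_pos_of_pos (by positivity : (0 : ℝ) < k * γ + 1)
  rw [norm_smul, Real.norm_of_nonneg (by positivity)]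
  calc t ^ ((k : ℝ) * γ) / Real.Gamma (k * γ + 1) * ‖v k‖
      ≤ t ^ ((k : ℝ) * γ) / Real.Gamma (k * γ + 1) * (C ^ k * M) := by gcongr; exact hv k
    _ = M * ((t ^ γ * C) ^ k / Real.Gamma (k * γ + 1)) := by
      rw [mul_pow, mul_comm (k : ℝ), Real.rpow_mul ht, Real.rpow_natCast]; ring

theorem hasDerivAt_mittagLefflerSeries [CompleteSpace E] (hγ0 : 0 < γ) (hγ1 : γ < 1)
    (hv : ∀ k, ‖v k‖ ≤ C ^ k * M) {τ : ℝ} (hτ : 0 < τ) :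
    HasDerivAt (mittagLefflerSeries γ v)
      (∑' k : ℕ, (k * γ * τ ^ ((k : ℝ) * γ - 1) / Real.Gamma (k * γ + 1)) • v k) τ := by
  have hmem : τ ∈ Ioo (τ / 2) (2 * τ) := ⟨by linarith, by linarith⟩
  unfold mittagLefflerSeries
  refine hasDerivAt_tsum_of_isPreconnected
    (g := fun (k : ℕ) (z : ℝ) => (z ^ ((k : ℝ) * γ) / Real.Gamma ((k : ℝ) * γ + 1)) • v k)
    (g' := fun (k : ℕ) (y : ℝ) => (k * γ * y ^ ((k : ℝ) * γ - 1) / Real.Gamma (k * γ + 1)) • v k)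
    ((Real.summable_pow_div_Gamma_mul_add_one hγ0 hγ1 (2 * (2 * τ) ^ γ * C)).mul_left
      (M / (τ / 2)))
    isOpen_Ioo isPreconnected_Ioo (fun k y hy => ?_) (fun k y hy => ?_) hmem
    (summable_mittagLeffler_terms hγ0 hγ1 hv hτ.le) hmem
  · have hy0 : y ≠ 0 := (by linarith [hy.1] : 0 < y).ne'
    exact ((Real.hasDerivAt_rpow_const (Or.inl hy0)).div_const _).smul_const (v k)
  · have hΓ := Real.Gamma_pos_of_pos (by positivity : (0 : ℝ) < k * γ + 1)
    rw [norm_smul, Real.norm_eq_abs]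
    calc |k * γ * y ^ ((k : ℝ) * γ - 1) / Real.Gamma (k * γ + 1)| * ‖v k‖
        ≤ (2 * (2 * τ) ^ γ) ^ k / (τ / 2 * Real.Gamma (k * γ + 1)) * (C ^ k * M) := by
          gcongr
          exacts [Real.abs_deriv_rpow_div_Gamma_le hγ0.le hγ1.le (by positivity) hy k, hv k]
      _ = M / (τ / 2) * ((2 * (2 * τ) ^ γ * C) ^ k / Real.Gamma (k * γ + 1)) := by
          rw [mul_pow]; ring

theorem deriv_mittagLefflerSeries [CompleteSpace E] (hγ0 : 0 < γ) (hγ1 : γ < 1)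
    (hv : ∀ k, ‖v k‖ ≤ C ^ k * M) {τ : ℝ} (hτ : 0 < τ) :
    deriv (mittagLefflerSeries γ v) τ = ∑' k : ℕ,
      ((k + 1) * γ * τ ^ (((k : ℝ) + 1) * γ - 1) / Real.Gamma ((k + 1) * γ + 1)) • v (k + 1) := by
  rw [(hasDerivAt_mittagLefflerSeries hγ0 hγ1 hv hτ).deriv, ← Nat.succ_injective.tsum_eq]
  · simp only [Nat.succ_eq_add_one, Nat.cast_add_one]
  · rintro (_ | j) hk
    · simp at hk
    · exact ⟨j, rfl⟩

theorem intervalIntegral_sub_rpow_smul_deriv_mittagLefflerSeries [CompleteSpace E]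
    (hγ0 : 0 < γ) (hγ1 : γ < 1) (hv : ∀ k, ‖v k‖ ≤ C ^ k * M) {t : ℝ} (ht : 0 < t) :
    ∫ τ in (0 : ℝ)..t, (t - τ) ^ (-γ) • deriv (mittagLefflerSeries γ v) τ
      = Real.Gamma (1 - γ) • mittagLefflerSeries γ (fun k => v (k + 1)) t := by
  set f : ℕ → ℝ → ℝ := fun k τ => (t - τ) ^ (-γ) *
    ((k + 1) * γ * τ ^ (((k : ℝ) + 1) * γ - 1) / Real.Gamma ((k + 1) * γ + 1)) with hf
  have hexp : -γ = (1 - γ) - 1 := by ring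
  have hf_int : ∀ k, IntervalIntegrable (f k) volume 0 t := fun k => by
    simpa only [hf, hexp] using Real.intervalIntegrable_sub_rpow_mul_deriv_rpow_div_Gamma
      (by positivity : 0 < ((k : ℝ) + 1) * γ) (by linarith : 0 < 1 - γ) ht
  have hf_eq : ∀ k : ℕ, ∫ τ in (0 : ℝ)..t, f k τ
      = Real.Gamma (1 - γ) * (t ^ ((k : ℝ) * γ) / Real.Gamma (k * γ + 1)) := fun k => by
    have h := Real.integral_sub_rpow_mul_deriv_rpow_div_Gamma
      (by positivity : 0 < ((k : ℝ) + 1) * γ) (by linarith : 0 < 1 - γ) ht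
    rwa [show ((k : ℝ) + 1) * γ + (1 - γ) = k * γ + 1 by ring, add_sub_cancel_right, ← hexp] at h
  have hf_nonneg : ∀ k, ∀ τ ∈ Ioc 0 t, 0 ≤ f k τ := fun k τ hτ =>
    mul_nonneg (Real.rpow_nonneg (sub_nonneg.2 hτ.2) _) (by have := hτ.1; positivity)
  have hsum : Summable fun k => (∫ τ in Ioc 0 t, |f k τ|) * ‖v (k + 1)‖ := by
    have hshift : ∀ k, ‖‖v (k + 1)‖‖ ≤ C ^ k * (C * M) := fun k => by
      rw [norm_norm, ← mul_assoc, ← pow_succ]; exact hv (k + 1)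
    refine ((summable_mittagLeffler_terms hγ0 hγ1 hshift ht.le).mul_left
      (Real.Gamma (1 - γ))).congr fun k => ?_
    rw [setIntegral_congr_fun measurableSet_Ioc fun τ hτ => abs_of_nonneg (hf_nonneg k τ hτ),
      ← intervalIntegral.integral_of_le ht.le, hf_eq, smul_eq_mul, mul_assoc]
  calc ∫ τ in (0 : ℝ)..t, (t - τ) ^ (-γ) • deriv (mittagLefflerSeries γ v) τ
      = ∫ τ in Ioc 0 t, ∑' k, f k τ • v (k + 1) := by
        rw [intervalIntegral.integral_of_le ht.le]
        refine setIntegral_congr_fun measurableSet_Ioc fun τ hτ => ?_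
        rw [deriv_mittagLefflerSeries hγ0 hγ1 hv hτ.1, ← tsum_const_smul'']
        simp only [hf, smul_smul]
    _ = ∑' k, (∫ τ in (0 : ℝ)..t, f k τ) • v (k + 1) := by
        rw [integral_tsum_smul (fun k => (hf_int k).1) hsum]
        simp only [intervalIntegral.integral_of_le ht.le]
    _ = Real.Gamma (1 - γ) • mittagLefflerSeries γ (fun k => v (k + 1)) t := by
        simp only [hf_eq, mul_smul, tsum_const_smul'', mittagLefflerSeries]
end MittagLeffler

/-- Let A be a real n×n matrix, 0 < γ < 1, and x₀ ∈ ℝⁿ. The series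
`x(t) = ∑_{k=0}^∞ (t^{k·γ}/Γ(k·γ+1)) · A^k · x₀` converges for every t ≥ 0, x is
differentiable on (0,∞), and x solves the homogeneous commensurate linear fractional
system `ᶜD^γ x = A·x` with `x(0) = x₀`. -/
theorem matrix_mittagLeffler_solves_linear_fractional_system
    (n : ℕ) (A : Matrix (Fin n) (Fin n) ℝ) (γ : ℝ) (hγ : 0 < γ) (hγ1 : γ < 1)
    (x₀ : Fin n → ℝ) (x : ℝ → (Fin n → ℝ))
    (hx : x = fun t : ℝ =>
      ∑' k : ℕ, (t ^ ((k : ℝ) * γ) / Real.Gamma ((k : ℝ) * γ + 1)) • (A ^ k).mulVec x₀) :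
    (∀ t : ℝ, 0 ≤ t →
      Summable (fun k : ℕ =>
        (t ^ ((k : ℝ) * γ) / Real.Gamma ((k : ℝ) * γ + 1)) • (A ^ k).mulVec x₀)) ∧
    (∀ t : ℝ, 0 < t → DifferentiableAt ℝ x t) ∧
    (∀ t : ℝ, 0 < t →
      (1 / Real.Gamma (1 - γ)) •
          (∫ τ in (0:ℝ)..t, ((t - τ) ^ (-γ) : ℝ) • deriv x τ)
        = A.mulVec (x t)) ∧
    x 0 = x₀ := by
  let L : (Fin n → ℝ) →L[ℝ] (Fin n → ℝ) := LinearMap.toContinuousLinearMap (Matrix.toLin' A)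
  have hL : ∀ w, L w = A.mulVec w := fun _ => rfl
  let v : ℕ → Fin n → ℝ := fun k => (A ^ k).mulVec x₀
  have hstep : ∀ k, v (k + 1) = L (v k) := fun k => by
    simp only [v, hL, pow_succ', Matrix.mulVec_mulVec]
  have hv := L.norm_le_pow_mul_of_succ_eq hstep
  have hsum (t : ℝ) (ht : 0 ≤ t) := summable_mittagLeffler_terms hγ hγ1 hv ht
  change x = mittagLefflerSeries γ v at hx
  subst hx
  refine ⟨hsum, fun t ht => (hasDerivAt_mittagLefflerSeries hγ hγ1 hv ht).differentiableAt,
    fun t ht => ?_, (mittagLefflerSeries_zero hγ.ne').trans (by simp [v])⟩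
  rw [intervalIntegral_sub_rpow_smul_deriv_mittagLefflerSeries hγ hγ1 hv ht, smul_smul, one_div,
    inv_mul_cancel₀ (Real.Gamma_pos_of_pos (by linarith)).ne', one_smul, ← hL]
  unfold mittagLefflerSeries
  simp only [L.map_tsum (hsum t ht.le), map_smul, hstep]
end
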